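/- Fix a natural number k. Let B_k be the poset of pairs (n,m) ∈ ℕ × ℕ with n + m ≥ k, and let A_k ⊆ B_k be the full subposet of pairs with k ≤ n + m ≤ k + 1, both equipped with the order (n,m) ⪯ (n',m') if and only if n' ≤ n and m' ≤ m. Then the inclusion functor from the poset category of A_k to the poset category of B_k is a final (colimit-cofinal) functor. -/

import Mathlib

open CategoryTheory

/-- The poset `B_k` of pairs `(n,m) ∈ ℕ × ℕ` with `n + m ≥ k`. -/
def MayIndexB (k : ℕ) : Type := {p : ℕ × ℕ // k ≤ p.1 + p.2}

/-- The poset `A_k` of pairs `(n,m) ∈ ℕ × ℕ` with `k ≤ n + m ≤ k + 1`. -/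
def MayIndexA (k : ℕ) : Type := {p : ℕ × ℕ // k ≤ p.1 + p.2 ∧ p.1 + p.2 ≤ k + 1}

/-- The order `(n,m) ⪯ (n',m')` iff `n' ≤ n` and `m' ≤ m` (opposite of componentwise). -/
instance (k : ℕ) : Preorder (MayIndexB k) where
  le x y := y.1.1 ≤ x.1.1 ∧ y.1.2 ≤ x.1.2
  le_refl x := ⟨le_refl _, le_refl _⟩
  le_trans x y z h₁ h₂ := ⟨h₂.1.trans h₁.1, h₂.2.trans h₁.2⟩

instance (k : ℕ) : Preorder (MayIndexA k) where
  le x y := y.1.1 ≤ x.1.1 ∧ y.1.2 ≤ x.1.2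
  le_refl x := ⟨le_refl _, le_refl _⟩
  le_trans x y z h₁ h₂ := ⟨h₂.1.trans h₁.1, h₂.2.trans h₁.2⟩

/-- The inclusion functor `A_k ⥤ B_k`. -/
def mayIncl (k : ℕ) : MayIndexA k ⥤ MayIndexB k :=
  Monotone.functor (f := fun x => (⟨x.1, x.2.1⟩ : MayIndexB k)) (fun _ _ h => h)

/-!
Fix `b = (n, m)` in `B_k`. The comma category `b/A_k` is the set of pairs `(x, y)` with
`x ≤ n`, `y ≤ m` and `k ≤ x + y ≤ k + 1`. Each of them maps to a pair on the line `x + y = k`,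
e.g. to `(min x k, k - min x k)`, and two neighbours `(x, y)`, `(x + 1, y - 1)` on that line both
receive a map from `(x + 1, y)`, which lies in `b/A_k`. So all objects are connected by zigzags.
-/

theorem CategoryTheory.StructuredArrow.zigzag_of_right_le {A B : Type*} [Preorder A] [Preorder B]
    {b : B} {F : A ⥤ B} {j j' : StructuredArrow b F} (h : j.right ≤ j'.right) : Zigzag j j' :=
  .of_hom (StructuredArrow.homMk (homOfLE h))

namespace mayIncl

variable {k : ℕ} (b : MayIndexB k)

def arrow (x y : ℕ) (hk : k ≤ x + y) (hk' : x + y ≤ k + 1) (hx : x ≤ b.1.1) (hy : y ≤ b.1.2) :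
    StructuredArrow b (mayIncl k) :=
  StructuredArrow.mk (homOfLE (⟨hx, hy⟩ : b ≤ (mayIncl k).obj ⟨(x, y), hk, hk'⟩))

@[simp]
theorem arrow_right_val (x y : ℕ) (hk : k ≤ x + y) (hk' : x + y ≤ k + 1) (hx : x ≤ b.1.1)
    (hy : y ≤ b.1.2) : (arrow b x y hk hk' hx hy).right.1 = (x, y) :=
  rfl

def lineArrow (p : ℕ × ℕ) (hp : k ≤ p.1 + p.2) (hb : p.1 ≤ b.1.1 ∧ p.2 ≤ b.1.2) :
    StructuredArrow b (mayIncl k) :=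
  arrow b (min p.1 k) (k - min p.1 k) (by omega) (by omega) (by omega) (by omega)

variable {b}

theorem zigzag_of_le {j j' : StructuredArrow b (mayIncl k)}
    (hx : j'.right.1.1 ≤ j.right.1.1) (hy : j'.right.1.2 ≤ j.right.1.2) : Zigzag j j' :=
  StructuredArrow.zigzag_of_right_le (show j.right ≤ j'.right from ⟨hx, hy⟩)

def toLine (j : StructuredArrow b (mayIncl k)) : StructuredArrow b (mayIncl k) :=
  lineArrow b j.right.1 j.right.2.1 (leOfHom j.hom)

theorem toLine_sum (j : StructuredArrow b (mayIncl k)) :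
    (toLine j).right.1.1 + (toLine j).right.1.2 = k := by
  simp only [toLine, lineArrow, arrow_right_val]
  omega

theorem zigzag_toLine (j : StructuredArrow b (mayIncl k)) : Zigzag j (toLine j) := by
  obtain ⟨hk, -⟩ := j.right.2
  apply zigzag_of_le <;> simp only [toLine, lineArrow, arrow_right_val] <;> omega

theorem zigzag_of_sum_eq_of_le {j j' : StructuredArrow b (mayIncl k)}
    (hj : j.right.1.1 + j.right.1.2 = k) (hj' : j'.right.1.1 + j'.right.1.2 = k)
    (hle : j.right.1.1 ≤ j'.right.1.1) : Zigzag j j' := by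
  obtain ⟨d, hd⟩ := Nat.exists_eq_add_of_le hle
  induction d generalizing j with
  | zero => exact zigzag_of_le (by omega) (by omega)
  | succ d ih =>
    have hxb : j.right.1.1 + 1 ≤ b.1.1 := (by omega : _ ≤ j'.right.1.1).trans (leOfHom j'.hom).1
    have hyb : j.right.1.2 ≤ b.1.2 := (leOfHom j.hom).2
    let u := arrow b (j.right.1.1 + 1) j.right.1.2 (by omega) (by omega) hxb hyb
    let v := arrow b (j.right.1.1 + 1) (j.right.1.2 - 1) (by omega) (by omega) hxb (by omega)
    have hju : Zigzag j u := (zigzag_of_le (j := u) (by simp [u]) (by simp [u])).symm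
    have huv : Zigzag u v := zigzag_of_le (by simp [u, v]) (by simp [u, v])
    have hv : v.right.1 = (j.right.1.1 + 1, j.right.1.2 - 1) := rfl
    exact hju.trans (huv.trans (ih (by rw [hv]; omega) (by rw [hv]; omega) (by rw [hv]; omega)))

end mayIncl

open mayIncl in
/-- The inclusion `A_k ⊆ B_k` is a final (colimit-cofinal) functor. -/
theorem mayIncl_final (k : ℕ) : (mayIncl k).Final := by
  refine ⟨fun b => ?_⟩
  have : Nonempty (StructuredArrow b (mayIncl k)) := ⟨lineArrow b b.1 b.2 ⟨le_rfl, le_rfl⟩⟩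
  refine zigzag_isConnected fun j₁ j₂ => ?_
  have hline : Zigzag (toLine j₁) (toLine j₂) := by
    rcases le_total (toLine j₁).right.1.1 (toLine j₂).right.1.1 with h | h
    · exact zigzag_of_sum_eq_of_le (toLine_sum j₁) (toLine_sum j₂) h
    · exact (zigzag_of_sum_eq_of_le (toLine_sum j₂) (toLine_sum j₁) h).symm
  exact (zigzag_toLine j₁).trans (hline.trans (zigzag_toLine j₂).symm)
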